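/- arXiv:2104.12336 — 6 statements merged into one kernel-verified Lean document; each statement's English description precedes it below -/
import Mathlib

section
/- Define φ_n(t) = (1-t)(1-t^2)⋯(1-t^n) with φ_0(t)=1, over the field ℚ(q) of rational functions. Suppose families U_{a,b}, V_{a,b} (a,b ∈ ℕ, zero for negative indices) satisfy U_{a,b} = Σ_{i=0}^{min(a,b)} q^{-(a+b-i)i} (1/φ_i(q^{-1})) V_{a-i,b-i} for all a,b. Then V_{a,b} = Σ_{i=0}^{min(a,b)} (-1)^i (q^{-i(a+b)+i(i+1)/2}/φ_i(q^{-1})) U_{a-i,b-i} for all a,b. -/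
noncomputable section

/-- `φ_n(t) = (1-t)(1-t^2)⋯(1-t^n)`, `φ_0 = 1`, in `ℚ(q)`. -/
def phiRF (t : RatFunc ℚ) (n : ℕ) : RatFunc ℚ :=
  ∏ i ∈ Finset.range n, (1 - t ^ (i + 1))

local notation "K" => RatFunc ℚ
local notation "tq" => ((RatFunc.X : RatFunc ℚ))⁻¹

lemma X_ne : (RatFunc.X : RatFunc ℚ) ≠ 0 := RatFunc.X_ne_zero

lemma t_pow_ne_one (n : ℕ) (hn : n ≠ 0) : tq ^ n ≠ 1 := by
  intro hcon
  have h1 : (RatFunc.X : RatFunc ℚ) ^ n = 1 := by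
    rw [inv_pow] at hcon
    rw [inv_eq_one] at hcon
    exact hcon
  have h2 : ((Polynomial.X : Polynomial ℚ) ^ n : Polynomial ℚ) = 1 := by
    have : RatFunc.C 1 = algebraMap (Polynomial ℚ) (RatFunc ℚ) 1 := by simp
    apply RatFunc.algebraMap_injective ℚ
    simpa [RatFunc.algebraMap_X] using h1
  have := congrArg Polynomial.natDegree h2
  simp [Polynomial.natDegree_X_pow] at this
  exact hn this

lemma phi_ne (i : ℕ) : phiRF tq i ≠ 0 := by
  unfold phiRF
  apply Finset.prod_ne_zero_iff.2
  intro j _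
  intro hcon
  exact t_pow_ne_one (j+1) (Nat.succ_ne_zero j) (by have := sub_eq_zero.mp hcon; exact this.symm)

lemma phi_succ (n : ℕ) : phiRF tq (n+1) = phiRF tq n * (1 - tq^(n+1)) := by
  unfold phiRF; rw [Finset.prod_range_succ]

lemma one_sub_t_pow_ne (n : ℕ) (hn : n ≠ 0) : (1 : K) - tq^n ≠ 0 := by
  intro hcon
  exact t_pow_ne_one n hn (sub_eq_zero.mp hcon).symm

/-- Gaussian binomial, `0` when `j > k`. -/
def gb (k j : ℕ) : K :=
  if j ≤ k then phiRF tq k * (phiRF tq j)⁻¹ * (phiRF tq (k - j))⁻¹ else 0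

lemma gb_zero (k : ℕ) : gb k 0 = 1 := by
  unfold gb
  rw [if_pos (Nat.zero_le k), Nat.sub_zero, show phiRF tq 0 = 1 from rfl, inv_one, mul_one,
    mul_inv_cancel₀ (phi_ne k)]

lemma gb_self (k : ℕ) : gb k k = 1 := by
  unfold gb
  rw [if_pos le_rfl, Nat.sub_self, show phiRF tq 0 = 1 from rfl, inv_one, mul_one,
    mul_inv_cancel₀ (phi_ne k)]

lemma gb_pascal (k j : ℕ) : gb (k+1) (j+1) = gb k j + tq^(j+1) * gb k (j+1) := by
  rcases lt_trichotomy (j+1) (k+1) with hlt | heq | hgt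
  · have hjk : j + 1 ≤ k := by omega
    unfold gb
    rw [if_pos (by omega), if_pos (by omega), if_pos hjk]
    rw [show k + 1 - (j + 1) = (k - (j+1)) + 1 from by omega,
        show k - j = (k - (j+1)) + 1 from by omega,
        phi_succ k, phi_succ j, phi_succ (k - (j+1))]
    rw [show tq^(k+1) = tq^(j+1) * tq^(k - (j+1) + 1) from by rw [← pow_add]; congr 1; omega]
    have hA := phi_ne k
    have hB := phi_ne j
    have hC := phi_ne (k - (j+1))
    have hu := one_sub_t_pow_ne (j+1) (by omega)
    have hv := one_sub_t_pow_ne (k - (j+1) + 1) (by omega)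
    set A := phiRF tq k
    set B := phiRF tq j
    set C := phiRF tq (k - (j+1))
    set u := tq^(j+1)
    set v := tq^(k - (j+1) + 1)
    field_simp
    ring
  · have hj : j = k := by omega
    subst hj
    have h0 : gb j (j+1) = 0 := by unfold gb; rw [if_neg (by omega)]
    rw [gb_self, gb_self, h0]; ring
  · have h1 : gb (k+1) (j+1) = 0 := by unfold gb; rw [if_neg (by omega)]
    have h2 : gb k j = 0 := by unfold gb; rw [if_neg (by omega)]
    have h3 : gb k (j+1) = 0 := by unfold gb; rw [if_neg (by omega)]
    rw [h1, h2, h3]; ring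

lemma gauss (m : ℕ) :
    ∑ j ∈ Finset.range (m+2), (-1:K)^j * tq^(j*(j-1)/2) * gb (m+1) j = 0 := by
  set G : ℕ → K := fun j => (-1:K)^j * tq^(j*(j+1)/2) * gb m j with hG
  rw [Finset.sum_range_succ']
  have key : ∀ j ∈ Finset.range (m+1),
      (-1:K)^(j+1) * tq^((j+1)*((j+1)-1)/2) * gb (m+1) (j+1) = G (j+1) - G j := by
    intro j _
    rw [hG]
    simp only
    rw [gb_pascal m j]
    have hp1 : (j+1)*((j+1)-1)/2 = j*(j+1)/2 := by
      have h : (j+1)*((j+1)-1) = j*(j+1) := by simp [Nat.mul_comm]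
      rw [h]
    have hp2 : (j+1)*(j+2)/2 = j*(j+1)/2 + (j+1) := by
      have h1 : (j+1)*(j+2) = j*(j+1) + 2*(j+1) := by ring
      have h2 : 2 ∣ j*(j+1) := (Nat.even_mul_succ_self j).two_dvd
      omega
    rw [hp1, hp2, pow_add]
    ring
  rw [Finset.sum_congr rfl key, Finset.sum_range_sub G (m+1)]
  have h1 : gb m (m+1) = 0 := by unfold gb; rw [if_neg (by omega)]
  rw [hG]
  simp [h1, gb_zero]

lemma gauss' (m : ℕ) :
    ∑ j ∈ Finset.range (m+2),
      (-1:K)^j * tq^(j*(j-1)/2) * (phiRF tq j)⁻¹ * (phiRF tq (m+1-j))⁻¹ = 0 := by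
  have hcong : ∀ j ∈ Finset.range (m+2),
      (-1:K)^j * tq^(j*(j-1)/2) * (phiRF tq j)⁻¹ * (phiRF tq (m+1-j))⁻¹
        = (phiRF tq (m+1))⁻¹ * ((-1:K)^j * tq^(j*(j-1)/2) * gb (m+1) j) := by
    intro j hj
    have hjle : j ≤ m + 1 := by have := Finset.mem_range.mp hj; omega
    unfold gb
    rw [if_pos hjle]
    have h1 := phi_ne (m+1)
    apply mul_left_cancel₀ h1
    rw [mul_inv_cancel_left₀ h1]
    ring
  rw [Finset.sum_congr rfl hcong, ← Finset.mul_sum, gauss m, mul_zero]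

lemma key (a b k : ℕ) (hk : 1 ≤ k) (hkm : k ≤ min a b) :
    ∑ i ∈ Finset.range (k+1),
      ((-1 : K) ^ i
          * (RatFunc.X : RatFunc ℚ) ^ (-(i * ((a : ℤ) + b)) + (i * (i + 1) / 2 : ℤ))
          * (phiRF (RatFunc.X)⁻¹ i)⁻¹)
        * ((RatFunc.X : RatFunc ℚ) ^ (-((((a - i : ℕ) : ℤ) + ((b - i : ℕ) : ℤ) - ((k - i : ℕ) : ℤ)) * ((k - i : ℕ) : ℤ)))
            * (phiRF (RatFunc.X)⁻¹ (k - i))⁻¹) = 0 := by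
  have hcong : ∀ i ∈ Finset.range (k+1),
      ((-1 : K) ^ i
          * (RatFunc.X : RatFunc ℚ) ^ (-(i * ((a : ℤ) + b)) + (i * (i + 1) / 2 : ℤ))
          * (phiRF (RatFunc.X)⁻¹ i)⁻¹)
        * ((RatFunc.X : RatFunc ℚ) ^ (-((((a - i : ℕ) : ℤ) + ((b - i : ℕ) : ℤ) - ((k - i : ℕ) : ℤ)) * ((k - i : ℕ) : ℤ)))
            * (phiRF (RatFunc.X)⁻¹ (k - i))⁻¹)
      = (RatFunc.X : RatFunc ℚ) ^ ((k:ℤ)*k - ((a:ℤ)+b)*k)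
          * ((-1:K)^i * tq^(i*(i-1)/2) * (phiRF tq i)⁻¹ * (phiRF tq (k-i))⁻¹) := by
    intro i hi
    have hik : i ≤ k := by have := Finset.mem_range.mp hi; omega
    have hca : ((a - i : ℕ) : ℤ) = (a:ℤ) - i := by omega
    have hcb : ((b - i : ℕ) : ℤ) = (b:ℤ) - i := by omega
    have hck : ((k - i : ℕ) : ℤ) = (k:ℤ) - i := by omega
    rw [hca, hcb, hck]
    -- exponent identity
    have hd1 : (2:ℤ) * ((i:ℤ) * (i + 1) / 2) = (i:ℤ) * (i+1) := by
      have h : (2:ℤ) ∣ (i:ℤ) * (i+1) := (Int.even_mul_succ_self (i:ℤ)).two_dvd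
      omega
    have h2 : 2 ∣ i*(i-1) := by
      rcases Nat.even_or_odd i with he | ho
      · exact Dvd.dvd.mul_right he.two_dvd _
      · exact Dvd.dvd.mul_left (Nat.Odd.sub_odd ho odd_one).two_dvd _
    have hd2 : 2 * ((i*(i-1)/2 : ℕ) : ℤ) = ((i*(i-1) : ℕ) : ℤ) := by
      exact_mod_cast congrArg (Nat.cast : ℕ → ℤ) (Nat.mul_div_cancel' h2)
    have hd3 : ((i*(i-1) : ℕ) : ℤ) = (i:ℤ)*(i:ℤ) - i := by
      rcases i with _ | n
      · simp
      · push_cast [Nat.add_sub_cancel]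
        ring
    have hexp : (-(i * ((a : ℤ) + b)) + (i * (i + 1) / 2 : ℤ))
        + (-((((a:ℤ) - i) + ((b:ℤ) - i) - ((k:ℤ) - i)) * ((k:ℤ) - i)))
        = ((k:ℤ)*k - ((a:ℤ)+b)*k) + (-((i*(i-1)/2 : ℕ) : ℤ)) := by
      apply mul_left_cancel₀ (two_ne_zero (α := ℤ))
      linear_combination hd1 + hd2 + hd3
    have ht : tq^(i*(i-1)/2) = (RatFunc.X : RatFunc ℚ) ^ (-((i*(i-1)/2 : ℕ) : ℤ)) := by
      rw [zpow_neg, zpow_natCast, inv_pow]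
    rw [ht]
    have hmul : (RatFunc.X : RatFunc ℚ) ^ (-(i * ((a : ℤ) + b)) + (i * (i + 1) / 2 : ℤ))
          * (RatFunc.X : RatFunc ℚ) ^ (-((((a:ℤ) - i) + ((b:ℤ) - i) - ((k:ℤ) - i)) * ((k:ℤ) - i)))
        = (RatFunc.X : RatFunc ℚ) ^ ((k:ℤ)*k - ((a:ℤ)+b)*k)
          * (RatFunc.X : RatFunc ℚ) ^ (-((i*(i-1)/2 : ℕ) : ℤ)) := by
      rw [← zpow_add₀ X_ne, ← zpow_add₀ X_ne, hexp]
    linear_combination ((-1:K)^i * (phiRF tq i)⁻¹ * (phiRF tq (k-i))⁻¹) * hmul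
  rw [Finset.sum_congr rfl hcong, ← Finset.mul_sum]
  obtain ⟨m, rfl⟩ : ∃ m, k = m + 1 := ⟨k - 1, by omega⟩
  rw [gauss' m, mul_zero]

lemma tri {M : Type*} [AddCommMonoid M] (n : ℕ) (f : ℕ → ℕ → M) :
    ∑ i ∈ Finset.range (n+1), ∑ j ∈ Finset.range (n - i + 1), f i j
      = ∑ k ∈ Finset.range (n+1), ∑ i ∈ Finset.range (k+1), f i (k - i) := by
  rw [Finset.sum_sigma', Finset.sum_sigma']
  refine Finset.sum_nbij' (fun x => ⟨x.1 + x.2, x.1⟩) (fun x => ⟨x.2, x.1 - x.2⟩) ?_ ?_ ?_ ?_ ?_ <;>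
    simp only [Finset.mem_sigma, Finset.mem_range, Sigma.forall] <;>
    intro p q hpq
  · omega
  · omega
  · rw [Nat.add_sub_cancel_left]
  · rw [Nat.add_sub_cancel' (by omega : q ≤ p)]
  · rw [Nat.add_sub_cancel_left]


def Bco (a b : ℕ) (i : ℕ) : K :=
  (-1:K)^i * (RatFunc.X : RatFunc ℚ) ^ (-(i * ((a : ℤ) + b)) + (i * (i + 1) / 2 : ℤ))
    * (phiRF (RatFunc.X)⁻¹ i)⁻¹

def Aco (a b : ℕ) (j : ℕ) : K :=
  (RatFunc.X : RatFunc ℚ) ^ (-(((a : ℤ) + b - j) * j)) * (phiRF (RatFunc.X)⁻¹ j)⁻¹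

lemma key' (a b k : ℕ) (hk : 1 ≤ k) (hkm : k ≤ min a b) :
    ∑ i ∈ Finset.range (k+1), Bco a b i * Aco (a-i) (b-i) (k-i) = 0 := by
  have := key a b k hk hkm
  simp only [Bco, Aco]
  convert this using 2

lemma Bco_zero (a b : ℕ) : Bco a b 0 = 1 := by
  simp [Bco, phiRF]

lemma Aco_zero (a b : ℕ) : Aco a b 0 = 1 := by
  simp [Aco, phiRF]

/-- Lemma 4.8: over the field `ℚ(q)` (with `q` the indeterminate), if
families `U, V : ℕ → ℕ → M` (values in a `ℚ(q)`-vector space) satisfy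
`U_{a,b} = Σ_{i=0}^{min(a,b)} q^{-(a+b-i)i} (1/φ_i(q⁻¹)) V_{a-i,b-i}`, then
`V_{a,b} = Σ_{i=0}^{min(a,b)} (-1)^i (q^{-i(a+b)+i(i+1)/2}/φ_i(q⁻¹)) U_{a-i,b-i}`. -/
theorem stmt1 {M : Type} [AddCommGroup M] [Module (RatFunc ℚ) M]
    (U V : ℕ → ℕ → M)
    (h : ∀ a b : ℕ, U a b
      = ∑ i ∈ Finset.range (min a b + 1),
          ((RatFunc.X : RatFunc ℚ) ^ (-(((a : ℤ) + b - i) * i))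
            * (phiRF (RatFunc.X)⁻¹ i)⁻¹) • V (a - i) (b - i)) :
    ∀ a b : ℕ, V a b
      = ∑ i ∈ Finset.range (min a b + 1),
          ((-1 : RatFunc ℚ) ^ i
            * (RatFunc.X : RatFunc ℚ) ^ (-(i * ((a : ℤ) + b)) + (i * (i + 1) / 2 : ℤ))
            * (phiRF (RatFunc.X)⁻¹ i)⁻¹) • U (a - i) (b - i) := by
  intro a b
  set m := min a b with hm
  symm
  calc ∑ i ∈ Finset.range (m+1),
          ((-1 : RatFunc ℚ) ^ i
            * (RatFunc.X : RatFunc ℚ) ^ (-(i * ((a : ℤ) + b)) + (i * (i + 1) / 2 : ℤ))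
            * (phiRF (RatFunc.X)⁻¹ i)⁻¹) • U (a - i) (b - i)
      = ∑ i ∈ Finset.range (m+1), Bco a b i • U (a - i) (b - i) := rfl
    _ = ∑ i ∈ Finset.range (m+1), ∑ j ∈ Finset.range (m - i + 1),
          (Bco a b i * Aco (a-i) (b-i) j) • V (a - (i+j)) (b - (i+j)) := by
        apply Finset.sum_congr rfl
        intro i hi
        have him : i ≤ m := by have := Finset.mem_range.mp hi; omega
        rw [h (a-i) (b-i), show min (a-i) (b-i) = m - i from by omega, Finset.smul_sum]
        apply Finset.sum_congr rfl
        intro j hj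
        rw [smul_smul, show a - i - j = a - (i+j) from by omega,
            show b - i - j = b - (i+j) from by omega]
        rfl
    _ = ∑ k ∈ Finset.range (m+1), ∑ i ∈ Finset.range (k+1),
          (Bco a b i * Aco (a-i) (b-i) (k-i)) • V (a - (i+(k-i))) (b - (i+(k-i))) :=
        tri m (fun i j => (Bco a b i * Aco (a-i) (b-i) j) • V (a - (i+j)) (b - (i+j)))
    _ = ∑ k ∈ Finset.range (m+1),
          (∑ i ∈ Finset.range (k+1), Bco a b i * Aco (a-i) (b-i) (k-i)) • V (a - k) (b - k) := by
        apply Finset.sum_congr rfl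
        intro k hk
        rw [Finset.sum_smul]
        apply Finset.sum_congr rfl
        intro i hi
        have hik : i ≤ k := by have := Finset.mem_range.mp hi; omega
        rw [show i + (k - i) = k from by omega]
    _ = V a b := by
        rw [Finset.sum_range_succ']
        have hz : ∀ k ∈ Finset.range m,
            (∑ i ∈ Finset.range ((k+1)+1), Bco a b i * Aco (a-i) (b-i) ((k+1)-i))
              • V (a - (k+1)) (b - (k+1)) = 0 := by
          intro k hk
          have hkm : k + 1 ≤ min a b := by have := Finset.mem_range.mp hk; omega
          rw [key' a b (k+1) (by omega) hkm, zero_smul]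
        rw [Finset.sum_congr rfl hz, Finset.sum_const_zero, zero_add,
            Finset.sum_range_one, Nat.sub_zero, Nat.sub_zero, Nat.sub_zero,
            Bco_zero, Aco_zero, mul_one, one_smul]

end
end

section
/- For k ≥ 1 and an invertible element v of a field with v^2 = q, the alternating sum Σ_{i=1}^{k} (-1)^i q^{-i(i+1)/2 + i k} / (φ_i(q^{-1}) φ_{k-i}(q^{-1})) equals -1/φ_k(q^{-1}), where φ_n(t) = (1-t)(1-t^2)⋯(1-t^n). -/
noncomputable section

namespace Stmt2Aux

open Finset

lemma choose_succ_two (i : ℕ) : (i + 1).choose 2 = i.choose 2 + i := by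
  rw [Nat.choose_succ_succ, Nat.choose_one_right, Nat.add_comm]

lemma mul_succ_choose (i : ℕ) : i * (i + 1) = 2 * i.choose 2 + 2 * i := by
  induction i with
  | zero => rfl
  | succ i ih =>
    rw [Nat.choose_succ_succ, Nat.choose_one_right]
    calc (i + 1) * (i + 1 + 1) = i * (i + 1) + 2 * (i + 1) := by ring
    _ = 2 * i.choose 2 + 2 * i + 2 * (i + 1) := by rw [ih]
    _ = 2 * (i + i.choose 2) + 2 * (i + 1) := by ring

variable (t : RatFunc ℚ) (ht : ∀ m, 1 ≤ m → (1 : RatFunc ℚ) - t ^ m ≠ 0)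

lemma phi_succ (n : ℕ) : phiRF t (n + 1) = phiRF t n * (1 - t ^ (n + 1)) :=
  Finset.prod_range_succ _ _

lemma phi_zero : phiRF t 0 = 1 := rfl

include ht in
lemma phi_ne (n : ℕ) : phiRF t n ≠ 0 := by
  induction n with
  | zero => simp [phi_zero]
  | succ n ih =>
    rw [phi_succ]
    exact mul_ne_zero ih (ht _ (by omega))

/-- Gaussian binomial coefficient `[k choose i]_t`, as an element of `ℚ(q)`. -/
def qb (k i : ℕ) : RatFunc ℚ :=
  if i ≤ k then phiRF t k * (phiRF t i * phiRF t (k - i))⁻¹ else 0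

include ht in
lemma qb_zero (k : ℕ) : qb t k 0 = 1 := by
  simp [qb, phi_zero, mul_inv_cancel₀ (phi_ne t ht k)]

include ht in
lemma qb_self (k : ℕ) : qb t k k = 1 := by
  simp [qb, phi_zero, mul_inv_cancel₀ (phi_ne t ht k)]

lemma qb_gt {k i : ℕ} (h : k < i) : qb t k i = 0 := by
  simp [qb, Nat.not_le.mpr h]

include ht in
lemma pascal (k j : ℕ) (hj : j + 1 ≤ k + 1) :
    qb t (k + 1) (j + 1) = qb t k (j + 1) + t ^ (k - j) * qb t k j := by
  rcases Nat.lt_or_ge j k with hjk | hjk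
  · obtain ⟨n, rfl⟩ : ∃ n, k = j + 1 + n := ⟨k - (j + 1), by omega⟩
    have e1 : j + 1 + n + 1 - (j + 1) = n + 1 := by omega
    have e2 : j + 1 + n - (j + 1) = n := by omega
    have e3 : j + 1 + n - j = n + 1 := by omega
    simp only [qb, if_pos (show j + 1 ≤ j + 1 + n + 1 by omega),
      if_pos (show j + 1 ≤ j + 1 + n by omega),
      if_pos (show j ≤ j + 1 + n by omega), e1, e2, e3]
    rw [show phiRF t (j + 1 + n + 1) = phiRF t (j + 1 + n) * (1 - t ^ (j + 1 + n + 1)) from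
        phi_succ t _,
      show phiRF t (n + 1) = phiRF t n * (1 - t ^ (n + 1)) from phi_succ t _,
      show phiRF t (j + 1) = phiRF t j * (1 - t ^ (j + 1)) from phi_succ t _]
    have h1 := phi_ne t ht (j + 1 + n)
    have h2 := phi_ne t ht n
    have h3 := phi_ne t ht j
    have h4 := ht (j + 1 + n + 1) (by omega)
    have h5 := ht (n + 1) (by omega)
    have h6 := ht (j + 1) (by omega)
    field_simp
    ring
  · have hkj : j = k := by omega
    subst hkj
    rw [qb_self t ht, qb_gt t (Nat.lt_succ_self j), Nat.sub_self, pow_zero,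
      qb_self t ht]
    ring

/-- The `i`-th term of the q-binomial theorem sum. -/
def term (x : RatFunc ℚ) (k i : ℕ) : RatFunc ℚ :=
  (-1) ^ i * t ^ (i.choose 2) * x ^ i * qb t k i

include ht in
lemma term_succ (x : RatFunc ℚ) (k i : ℕ) (hik : i ≤ k) :
    term t x (k + 1) (i + 1) = term t x k (i + 1) - (t ^ k * x) * term t x k i := by
  unfold term
  rw [pascal t ht k i (by omega), choose_succ_two, pow_add t (i.choose 2) i]
  have e3 : t ^ (k - i) * t ^ i = t ^ k := by rw [← pow_add]; congr 1; omega
  linear_combination ((-1 : RatFunc ℚ) ^ (i + 1) * t ^ (i.choose 2) * x ^ (i + 1) * qb t k i) * e3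

include ht in
/-- The q-binomial theorem (at a general point `x`). -/
lemma qbinom_thm (x : RatFunc ℚ) (k : ℕ) :
    ∑ i ∈ range (k + 1), term t x k i = ∏ j ∈ range k, (1 - t ^ j * x) := by
  induction k with
  | zero => simp [term, qb_zero t ht]
  | succ k ih =>
    rw [Finset.prod_range_succ, ← ih, Finset.sum_range_succ']
    have h1 : ∀ i ∈ range (k + 1), term t x (k + 1) (i + 1)
        = term t x k (i + 1) - (t ^ k * x) * term t x k i := by
      intro i hi
      exact term_succ t ht x k i (by simpa using Nat.lt_succ_iff.mp (mem_range.mp hi))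
    rw [Finset.sum_congr rfl h1, Finset.sum_sub_distrib, ← Finset.mul_sum]
    have hz : term t x k (k + 1) = 0 := by
      simp [term, qb_gt t (Nat.lt_succ_self k)]
    have h2 := Finset.sum_range_succ' (fun i => term t x k i) (k + 1)
    rw [Finset.sum_range_succ (fun i => term t x k i) (k + 1), hz] at h2
    have h0 : term t x (k + 1) 0 = 1 := by simp [term, qb_zero t ht]
    have h0' : term t x k 0 = 1 := by simp [term, qb_zero t ht]
    rw [h0]
    linear_combination -h2 - h0'

lemma ht_inv_X : ∀ m, 1 ≤ m → (1 : RatFunc ℚ) - ((RatFunc.X : RatFunc ℚ))⁻¹ ^ m ≠ 0 := by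
  intro m hm
  have hX : (RatFunc.X : RatFunc ℚ) ^ m ≠ 1 := by
    intro h
    have h2 : ((Polynomial.X : Polynomial ℚ) ^ m : Polynomial ℚ) = 1 := by
      apply IsFractionRing.injective (Polynomial ℚ) (RatFunc ℚ)
      simpa [map_pow, RatFunc.algebraMap_X] using h
    have := congrArg Polynomial.natDegree h2
    simp [Polynomial.natDegree_X_pow] at this
    omega
  refine sub_ne_zero.mpr (Ne.symm ?_)
  simpa [inv_pow, inv_eq_one] using fun h => hX h

end Stmt2Aux

open Finset Stmt2Aux in
/-- in `ℚ(q)` (with `q` the indeterminate), for `k ≥ 1`,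
`Σ_{i=1}^{k} (-1)^i q^{-i(i+1)/2 + i k} / (φ_i(q⁻¹) φ_{k-i}(q⁻¹)) = -1/φ_k(q⁻¹)`. -/
theorem stmt2 (k : ℕ) (hk : 1 ≤ k) :
    ∑ i ∈ Finset.Icc 1 k,
      (-1 : RatFunc ℚ) ^ i
        * (RatFunc.X : RatFunc ℚ) ^ (-(i * (i + 1) / 2 : ℤ) + (i : ℤ) * k)
        * (phiRF (RatFunc.X)⁻¹ i * phiRF (RatFunc.X)⁻¹ (k - i))⁻¹
      = -(phiRF (RatFunc.X)⁻¹ k)⁻¹ := by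
  have hX : (RatFunc.X : RatFunc ℚ) ≠ 0 := RatFunc.X_ne_zero
  set t : RatFunc ℚ := (RatFunc.X)⁻¹ with htdef
  have ht : ∀ m, 1 ≤ m → (1 : RatFunc ℚ) - t ^ m ≠ 0 := ht_inv_X
  set x : RatFunc ℚ := RatFunc.X ^ (k - 1) with hxdef
  -- the product in the q-binomial theorem vanishes at x = X^(k-1)
  have hprod : ∏ j ∈ range k, (1 - t ^ j * x) = 0 := by
    apply Finset.prod_eq_zero (Finset.mem_range.mpr (show k - 1 < k by omega))
    rw [htdef, hxdef, inv_pow, inv_mul_cancel₀ (pow_ne_zero _ hX), sub_self]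
  have hsum : ∑ i ∈ range (k + 1), term t x k i = 0 := by
    rw [qbinom_thm t ht x k, hprod]
  -- peel off the i = 0 term
  have hins : range (k + 1) = insert 0 (Finset.Icc 1 k) := by
    ext a; simp [Nat.lt_succ_iff]; omega
  have h0n : (0 : ℕ) ∉ Finset.Icc 1 k := by simp
  rw [hins, Finset.sum_insert h0n] at hsum
  have ht0 : term t x k 0 = 1 := by simp [term, qb_zero t ht]
  rw [ht0] at hsum
  have hIcc : ∑ i ∈ Finset.Icc 1 k, term t x k i = -1 := by linear_combination hsum
  -- compare the two sums termwise
  have hterm : ∀ i ∈ Finset.Icc 1 k,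
      (-1 : RatFunc ℚ) ^ i
        * (RatFunc.X : RatFunc ℚ) ^ (-(i * (i + 1) / 2 : ℤ) + (i : ℤ) * k)
        * (phiRF t i * phiRF t (k - i))⁻¹
      = term t x k i * (phiRF t k)⁻¹ := by
    intro i hi
    obtain ⟨hi1, hik⟩ := Finset.mem_Icc.mp hi
    have hci : (i : ℤ) * ((i : ℤ) + 1) = 2 * ((i.choose 2 : ℤ) + (i : ℤ)) := by
      have h := congrArg (Nat.cast (R := ℤ)) (mul_succ_choose i)
      push_cast at h
      linear_combination h
    have hz : (-(i * (i + 1) / 2 : ℤ) + (i : ℤ) * k)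
        = (((k - 1) * i : ℕ) : ℤ) - ((i.choose 2 : ℕ) : ℤ) := by
      rw [hci, Int.mul_ediv_cancel_left _ two_ne_zero]
      push_cast [Nat.cast_sub hk]
      ring
    have hx : t ^ (i.choose 2) * x ^ i
        = (RatFunc.X : RatFunc ℚ) ^ (-(i * (i + 1) / 2 : ℤ) + (i : ℤ) * k) := by
      rw [hz, zpow_sub₀ hX, zpow_natCast, zpow_natCast, htdef, hxdef, inv_pow,
        ← pow_mul, div_eq_mul_inv, mul_comm]
    rw [term, qb, if_pos hik, ← hx]
    have hφ : phiRF t k * (phiRF t k)⁻¹ = 1 := mul_inv_cancel₀ (phi_ne t ht k)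
    calc (-1 : RatFunc ℚ) ^ i * (t ^ (i.choose 2) * x ^ i) * (phiRF t i * phiRF t (k - i))⁻¹
        = (-1 : RatFunc ℚ) ^ i * t ^ (i.choose 2) * x ^ i * (phiRF t i * phiRF t (k - i))⁻¹
          * (phiRF t k * (phiRF t k)⁻¹) := by rw [hφ]; ring
      _ = (-1) ^ i * t ^ (i.choose 2) * x ^ i * (phiRF t k * (phiRF t i * phiRF t (k - i))⁻¹)
          * (phiRF t k)⁻¹ := by ring
  rw [Finset.sum_congr rfl hterm, ← Finset.sum_mul, hIcc]
  ring

end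
end

section
/- Euler's identity: in the ring of formal power series ℚ(q)[[x]], Σ_{r≥0} x^r / ((1-q)(1-q^2)⋯(1-q^r)) = 1/∏_{n≥0}(1 - q^n x), i.e., the q-exponential exp_q(x/(1-q)) equals the inverse of the infinite Pochhammer product (x; q)_∞. -/
noncomputable section

instance : TopologicalSpace (PowerSeries ℚ) :=
  TopologicalSpace.induced (fun f (n : ℕ) => PowerSeries.coeff (R := ℚ) n f) inferInstance

instance : TopologicalSpace (PowerSeries (PowerSeries ℚ)) :=
  TopologicalSpace.induced
    (fun f (n : ℕ) => PowerSeries.coeff (R := PowerSeries ℚ) n f) inferInstance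

/-!
Let `q` and `x` be the variables of `K⟦X⟧` and `K⟦X⟧⟦X⟧`, `(q;q)_r = (1-q)⋯(1-q^r)` and
`e(a) = Σ_r a^r x^r / (q;q)_r`. Comparing coefficients gives `e(a) (1 - a x) = e(a q)`, so
`e(1) ∏_{n<N} (1 - q^n x) = e(q^N)`, which is `1` modulo `q^N`. Since the factors with `n ≥ N`
are `1` modulo `q^N` as well, every finite product containing the first `N` factors agrees with
`e(1)⁻¹` modulo `q^N`; this is the coefficientwise convergence of the infinite product to `e(1)⁻¹`.
-/

open PowerSeries Topology

namespace EulerIdentity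

section Field

variable {K : Type*} [Field K]

def qPochhammer (r : ℕ) : K⟦X⟧ := ∏ i ∈ Finset.range r, (1 - X ^ (i + 1))

lemma inv_qPochhammer_succ_mul (r : ℕ) :
    (qPochhammer (K := K) (r + 1))⁻¹ * (1 - X ^ (r + 1)) = (qPochhammer r)⁻¹ := by
  have hunit : (1 - X ^ (r + 1) : K⟦X⟧)⁻¹ * (1 - X ^ (r + 1)) = 1 :=
    PowerSeries.inv_mul_cancel _ (by simp)
  rw [qPochhammer, Finset.prod_range_succ, PowerSeries.mul_inv_rev, mul_comm _ (_)⁻¹,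
    mul_assoc, hunit, mul_one, qPochhammer]

def qExp (a : K⟦X⟧) : K⟦X⟧⟦X⟧ := mk fun r => a ^ r * (qPochhammer r)⁻¹

lemma qExp_one : qExp (1 : K⟦X⟧) = mk fun r => (qPochhammer r)⁻¹ := by
  simp [qExp]

lemma constantCoeff_qExp (a : K⟦X⟧) : constantCoeff (qExp a) = 1 := by
  simp [qExp, qPochhammer]

lemma qExp_mul_one_sub_C_mul_X (a : K⟦X⟧) : qExp a * (1 - C a * X) = qExp (a * X) := by
  ext (_ | r) : 1
  · simp [qExp, mul_sub, mul_left_comm _ (C a)]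
  · rw [mul_sub, mul_one, mul_left_comm, map_sub, coeff_C_mul, coeff_succ_mul_X]
    simp only [qExp, coeff_mk]
    rw [← inv_qPochhammer_succ_mul r]
    ring

lemma qExp_one_mul_prod_range (N : ℕ) :
    qExp 1 * ∏ i ∈ Finset.range N, (1 - C ((X : K⟦X⟧) ^ i) * X) = qExp (X ^ N) := by
  induction N with
  | zero => simp
  | succ N ih => rw [Finset.prod_range_succ, ← mul_assoc, ih, qExp_mul_one_sub_C_mul_X, pow_succ]

lemma map_qExp_of_mem {I : Ideal K⟦X⟧} {a : K⟦X⟧} (ha : a ∈ I) :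
    map (Ideal.Quotient.mk I) (qExp a) = 1 := by
  ext (_ | r) : 1
  · simp [coeff_map, constantCoeff_qExp]
  · rw [coeff_map, coeff_one, if_neg r.succ_ne_zero, qExp, coeff_mk, Ideal.Quotient.eq_zero_iff_mem]
    exact I.mul_mem_right _ (I.pow_mem_of_mem ha _ r.succ_pos)

lemma map_prod_eq_map_invOfUnit {n : ℕ} {s : Finset ℕ} (hs : Finset.range n ⊆ s) :
    map (Ideal.Quotient.mk (Ideal.span {(X : K⟦X⟧) ^ n})) (∏ i ∈ s, (1 - C (X ^ i) * X)) =
      map (Ideal.Quotient.mk _) ((qExp 1).invOfUnit 1) := by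
  set π := map (Ideal.Quotient.mk (Ideal.span {(X : K⟦X⟧) ^ n}))
  have hfactor : ∀ i ∈ s \ Finset.range n, π (1 - C (X ^ i) * X) = 1 := fun i hi => by
    have hni : n ≤ i := by simpa using (Finset.mem_sdiff.mp hi).2
    have : Ideal.Quotient.mk _ ((X : K⟦X⟧) ^ i) = 0 :=
      Ideal.Quotient.eq_zero_iff_mem.mpr (Ideal.mem_span_singleton.mpr (pow_dvd_pow X hni))
    simp only [π, map_sub, map_one, map_mul, map_C, map_X, this, map_zero, zero_mul, sub_zero]
  have hE : π (qExp 1) * π (∏ i ∈ Finset.range n, (1 - C (X ^ i) * X)) = 1 := by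
    rw [← map_mul, qExp_one_mul_prod_range, map_qExp_of_mem (Ideal.mem_span_singleton_self _)]
  have hunit : constantCoeff (qExp (1 : K⟦X⟧)) = ↑(1 : K⟦X⟧ˣ) := constantCoeff_qExp 1
  calc π (∏ i ∈ s, (1 - C (X ^ i) * X))
      = π ((qExp 1).invOfUnit 1 * qExp 1) * π (∏ i ∈ Finset.range n, (1 - C (X ^ i) * X)) := by
        rw [invOfUnit_mul _ _ hunit, map_one, one_mul, ← Finset.prod_sdiff hs, map_mul,
          map_prod, Finset.prod_eq_one hfactor, one_mul]
    _ = π ((qExp 1).invOfUnit 1) := by rw [map_mul, mul_assoc, hE, mul_one]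

lemma coeff_coeff_eq_of_map_eq {n : ℕ} {f g : K⟦X⟧⟦X⟧}
    (h : map (Ideal.Quotient.mk (Ideal.span {(X : K⟦X⟧) ^ n})) f = map (Ideal.Quotient.mk _) g)
    (m : ℕ) {k : ℕ} (hk : k < n) : coeff k (coeff m f) = coeff k (coeff m g) := by
  have hm := congrArg (coeff m) h
  rw [coeff_map, coeff_map, Ideal.Quotient.eq, Ideal.mem_span_singleton, X_pow_dvd_iff] at hm
  exact sub_eq_zero.mp (by simpa using hm k hk)

end Field

instance : T2Space ℚ⟦X⟧ :=
  Topology.IsEmbedding.t2Space (f := fun f (n : ℕ) => coeff n f)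
    ⟨⟨rfl⟩, fun _ _ h => PowerSeries.ext fun n => congrFun h n⟩

instance : T2Space ℚ⟦X⟧⟦X⟧ :=
  Topology.IsEmbedding.t2Space (f := fun f (n : ℕ) => coeff n f)
    ⟨⟨rfl⟩, fun _ _ h => PowerSeries.ext fun n => congrFun h n⟩

lemma tendsto_of_eventually_coeff_coeff_eq {ι : Type*} {l : Filter ι} {F : ι → ℚ⟦X⟧⟦X⟧}
    {g : ℚ⟦X⟧⟦X⟧} (h : ∀ m k, ∀ᶠ i in l, coeff k (coeff m (F i)) = coeff k (coeff m g)) :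
    Filter.Tendsto F l (𝓝 g) := by
  rw [nhds_induced, Filter.tendsto_comap_iff, tendsto_pi_nhds]
  intro m
  rw [Function.comp_def, nhds_induced, Filter.tendsto_comap_iff, tendsto_pi_nhds]
  exact fun k => tendsto_const_nhds.congr' ((h m k).mono fun _ hi => hi.symm)

lemma hasProd_one_sub_C_X_pow_mul_X :
    HasProd (fun i => 1 - C ((X : ℚ⟦X⟧) ^ i) * X) ((qExp 1).invOfUnit 1) := by
  refine tendsto_of_eventually_coeff_coeff_eq fun m k => ?_
  filter_upwards [Filter.eventually_ge_atTop (Finset.range (k + 1))] with s hs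
  exact coeff_coeff_eq_of_map_eq (map_prod_eq_map_invOfUnit hs) m k.lt_succ_self

end EulerIdentity

open EulerIdentity in
/-- Euler's identity: in `ℚ[[q]][[x]]`,
`Σ_{r≥0} x^r/((1-q)(1-q^2)⋯(1-q^r)) = 1/(x;q)_∞`, i.e. the `q`-exponential
`exp_q(x/(1-q))` is the inverse of the infinite Pochhammer product
`(x;q)_∞ = ∏_{n≥0}(1-q^n x)` (an infinite product converging coefficientwise,
formalized by `∏'`).  Equivalently, their product is `1`. -/
theorem stmt4 :
    (PowerSeries.mk fun r =>
        (∏ i ∈ Finset.range r, (1 - (PowerSeries.X : PowerSeries ℚ) ^ (i + 1)))⁻¹)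
      * (∏' n : ℕ, ((1 : PowerSeries (PowerSeries ℚ))
            - PowerSeries.C (R := PowerSeries ℚ) ((PowerSeries.X : PowerSeries ℚ) ^ n)
              * PowerSeries.X))
      = 1 := by
  change (mk fun r => (qPochhammer r)⁻¹) * _ = 1
  rw [← qExp_one, hasProd_one_sub_C_X_pow_mul_X.tprod_eq]
  exact mul_invOfUnit _ _ (constantCoeff_qExp 1)

end
end

section
/- Let μ be a partition of n ≥ 1 with ℓ = ℓ(μ) parts, and let v be an indeterminate with q = v^2. Let μ' be the conjugate partition and for r ≥ 0 let |μ^{(r)}| = Σ_{i>r}(i-r)m_i(μ) be the number of boxes of μ strictly right of column r. Then Σ_{r≥1} v^{n-r}[n-r]_v q^{n-|μ^{(r)}|} (1 + q^{-1} - q^{-1+μ'_{r+1}} - q^{-μ'_r}) = v^n [n]_v (q^{ℓ-1} - 1), where [m]_v = (v^m - v^{-m})/(v - v^{-1}). -/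
noncomputable section

/-- The balanced quantum integer `[m]_v = (v^m - v^{-m})/(v - v⁻¹)` in `ℚ(v)`,
for `m ∈ ℤ`. -/
def qIntZ (m : ℤ) : RatFunc ℚ :=
  ((RatFunc.X : RatFunc ℚ) ^ m - (RatFunc.X : RatFunc ℚ) ^ (-m))
    / (RatFunc.X - (RatFunc.X : RatFunc ℚ)⁻¹)

/-- The `r`-th part `μ'_r = Σ_{i≥r} m_i(μ)` of the conjugate partition:
the number of parts of `μ` that are `≥ r`. -/
def conjPart (μ : Multiset ℕ) (r : ℕ) : ℕ := (μ.filter fun x => r ≤ x).card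

/-- `|μ^{(r)}| = Σ_{i>r} (i-r) m_i(μ)`: the number of boxes of `μ` strictly to the
right of column `r`. -/
def boxesAfter (μ : Multiset ℕ) (r : ℕ) : ℕ := (μ.map fun x => x - r).sum

namespace Stmt6Aux

lemma rec_boxes (μ : Multiset ℕ) (r : ℕ) :
    boxesAfter μ r = boxesAfter μ (r+1) + conjPart μ (r+1) := by
  induction μ using Multiset.induction with
  | empty => simp [boxesAfter, conjPart]
  | cons a s ih =>
    simp only [boxesAfter, conjPart, Multiset.map_cons, Multiset.sum_cons,
      Multiset.filter_cons] at *
    split_ifs <;> simp_all <;> omega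

lemma mem_le_sum {μ : Multiset ℕ} {x : ℕ} (h : x ∈ μ) : x ≤ μ.sum := by
  obtain ⟨t, rfl⟩ := Multiset.exists_cons_of_mem h
  simp

lemma boxes_zero (μ : Multiset ℕ) : boxesAfter μ 0 = μ.sum := by simp [boxesAfter]

lemma boxes_top (μ : Multiset ℕ) {r : ℕ} (h : μ.sum ≤ r) : boxesAfter μ r = 0 := by
  rw [boxesAfter]
  apply Multiset.sum_eq_zero
  intro y hy
  obtain ⟨x, hx, rfl⟩ := Multiset.mem_map.1 hy
  exact Nat.sub_eq_zero_of_le (le_trans (mem_le_sum hx) h)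

lemma conj_one (μ : Multiset ℕ) (hpos : ∀ x ∈ μ, 0 < x) : conjPart μ 1 = μ.card := by
  rw [conjPart]
  congr 1
  exact Multiset.filter_eq_self.2 fun x hx => hpos x hx

lemma conj_top (μ : Multiset ℕ) {r : ℕ} (h : μ.sum < r) : conjPart μ r = 0 := by
  rw [conjPart, Multiset.card_eq_zero, Multiset.filter_eq_nil]
  intro x hx
  have := mem_le_sum hx
  omega

/-- `q = v²` as an element of `ℚ(v)`. -/
def Qq : RatFunc ℚ := (RatFunc.X : RatFunc ℚ) ^ 2

lemma Qq_ne_zero : Qq ≠ 0 := pow_ne_zero 2 RatFunc.X_ne_zero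

lemma denom_ne_zero : (RatFunc.X : RatFunc ℚ) - (RatFunc.X : RatFunc ℚ)⁻¹ ≠ 0 := by
  rw [sub_ne_zero]
  intro h
  have h2 : (RatFunc.X : RatFunc ℚ) ^ 2 = 1 := by
    rw [sq]
    nth_rewrite 2 [h]
    exact mul_inv_cancel₀ RatFunc.X_ne_zero
  have h3 : (Polynomial.X ^ 2 : Polynomial ℚ) = 1 := by
    apply RatFunc.algebraMap_injective ℚ
    rw [map_pow, map_one, RatFunc.algebraMap_X]
    exact h2
  have := congrArg Polynomial.natDegree h3
  simp [Polynomial.natDegree_X_pow] at this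

lemma pref (m : ℤ) :
    (RatFunc.X : RatFunc ℚ) ^ m * qIntZ m
      = (Qq ^ m - 1) / (RatFunc.X - (RatFunc.X : RatFunc ℚ)⁻¹) := by
  have hX : (RatFunc.X : RatFunc ℚ) ≠ 0 := RatFunc.X_ne_zero
  rw [qIntZ, mul_div_assoc']
  congr 1
  rw [mul_sub, zpow_neg, mul_inv_cancel₀ (zpow_ne_zero _ hX)]
  congr 1
  rw [Qq, sq, mul_zpow]

/-- `P μ r = q^{n - b(r)}`. -/
def P (μ : Multiset ℕ) (r : ℕ) : RatFunc ℚ :=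
  Qq ^ ((μ.sum : ℤ) - (boxesAfter μ r : ℤ))

/-- `E μ s = q⁻¹ (q^{n-s} - 1)(P(s+1) - P(s))`. -/
def Ee (μ : Multiset ℕ) (s : ℕ) : RatFunc ℚ :=
  Qq⁻¹ * (Qq ^ ((μ.sum : ℤ) - (s : ℤ)) - 1) * (P μ (s+1) - P μ s)

/-- The cleared summand at `r = s + 1`. -/
def gterm (μ : Multiset ℕ) (s : ℕ) : RatFunc ℚ :=
  (Qq ^ ((μ.sum : ℤ) - ((s+1 : ℕ) : ℤ)) - 1) * P μ (s+1)
    * (1 + Qq⁻¹ - Qq ^ (-1 + (conjPart μ (s+1+1) : ℤ))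
        - Qq ^ (-(conjPart μ (s+1) : ℤ)))

lemma perterm (μ : Multiset ℕ) (s : ℕ) :
    gterm μ s = (Qq⁻¹ - 1) * (P μ (s+1) - P μ s) + (Ee μ s - Ee μ (s+1)) := by
  have hq := Qq_ne_zero
  have hT1 : P μ (s+1) * Qq ^ (-(conjPart μ (s+1) : ℤ)) = P μ s := by
    rw [P, P, ← zpow_add₀ hq]
    congr 1
    have h := rec_boxes μ s
    omega
  have hT2 : P μ (s+1) * Qq ^ (-1 + (conjPart μ (s+1+1) : ℤ))
      = Qq⁻¹ * P μ (s+1+1) := by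
    rw [P, P, ← zpow_add₀ hq, ← zpow_neg_one Qq, ← zpow_add₀ hq]
    congr 1
    have h := rec_boxes μ (s+1)
    omega
  have hq1 : Qq ^ ((μ.sum : ℤ) - ((s+1 : ℕ) : ℤ))
      = Qq⁻¹ * Qq ^ ((μ.sum : ℤ) - (s : ℤ)) := by
    rw [← zpow_neg_one Qq, ← zpow_add₀ hq]
    congr 1
    push_cast
    ring
  rw [gterm, Ee, Ee, hq1]
  linear_combination (-(Qq⁻¹ * Qq ^ ((μ.sum : ℤ) - (s : ℤ)) - 1)) * hT1
    + (-(Qq⁻¹ * Qq ^ ((μ.sum : ℤ) - (s : ℤ)) - 1)) * hT2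

lemma core (μ : Multiset ℕ) (hpos : ∀ x ∈ μ, 0 < x) :
    ∑ s ∈ Finset.range μ.sum, gterm μ s
      = (Qq ^ (μ.sum : ℤ) - 1) * (Qq ^ ((Multiset.card μ : ℤ) - 1) - 1) := by
  have hq := Qq_ne_zero
  have hPn : P μ μ.sum = Qq ^ (μ.sum : ℤ) := by
    rw [P, boxes_top μ le_rfl]
    norm_num
  have hP0 : P μ 0 = 1 := by
    rw [P, boxes_zero]
    simp
  have hP1 : P μ 1 = Qq ^ (Multiset.card μ : ℤ) := by
    rw [P]
    congr 1
    have h := rec_boxes μ 0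
    rw [boxes_zero, conj_one μ hpos] at h
    norm_num at h
    omega
  have hEn : Ee μ μ.sum = 0 := by
    rw [Ee, sub_self, zpow_zero, sub_self]
    ring
  have hE0 : Ee μ 0 = Qq⁻¹ * (Qq ^ (μ.sum : ℤ) - 1) * (Qq ^ (Multiset.card μ : ℤ) - 1) := by
    rw [Ee, hP1, hP0]
    norm_num
  calc ∑ s ∈ Finset.range μ.sum, gterm μ s
      = ∑ s ∈ Finset.range μ.sum,
          ((Qq⁻¹ - 1) * (P μ (s+1) - P μ s) + (Ee μ s - Ee μ (s+1))) :=
        Finset.sum_congr rfl fun s _ => perterm μ s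
    _ = (Qq⁻¹ - 1) * ∑ s ∈ Finset.range μ.sum, (P μ (s+1) - P μ s)
          + ∑ s ∈ Finset.range μ.sum, (Ee μ s - Ee μ (s+1)) := by
        rw [Finset.sum_add_distrib, Finset.mul_sum]
    _ = (Qq⁻¹ - 1) * (P μ μ.sum - P μ 0) + (Ee μ 0 - Ee μ μ.sum) := by
        rw [Finset.sum_range_sub, Finset.sum_range_sub']
    _ = (Qq ^ (μ.sum : ℤ) - 1) * (Qq ^ ((Multiset.card μ : ℤ) - 1) - 1) := by
        rw [hPn, hP0, hEn, hE0, zpow_sub_one₀ hq]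
        ring

lemma finsum_cut (f : ℕ → RatFunc ℚ) (N : ℕ) (h0 : ∀ r, N < r → f r = 0) :
    (∑ᶠ (r : ℕ) (_ : 1 ≤ r), f r)
      = ∑ r ∈ Finset.range (N+1), if 1 ≤ r then f r else 0 := by
  classical
  rw [finsum_congr (fun r : ℕ => (finsum_eq_if (p := 1 ≤ r) (x := f r)))]
  apply finsum_eq_sum_of_support_subset
  intro r hr
  simp only [Function.mem_support, ne_eq] at hr
  simp only [Finset.coe_range, Set.mem_Iio]
  by_contra hc
  push_neg at hc
  apply hr
  rw [if_pos (by omega), h0 r (by omega)]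

end Stmt6Aux

open Stmt6Aux in
/-- identity (4.8) in the paper: for a partition `μ` of `n ≥ 1` with
`ℓ` parts, working in `ℚ(v)` with `q = v²`,
`Σ_{r≥1} v^{n-r}[n-r]_v q^{n-|μ^{(r)}|}(1 + q⁻¹ - q^{-1+μ'_{r+1}} - q^{-μ'_r})
  = v^n [n]_v (q^{ℓ-1} - 1)`.
(The sum over `r ≥ 1` has finite support, and is formalized by `finsum`.) -/
theorem stmt6 (μ : Multiset ℕ) (hpos : ∀ x ∈ μ, 0 < x) (hn : 1 ≤ μ.sum) :
    (∑ᶠ (r : ℕ) (_ : 1 ≤ r),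
      (RatFunc.X : RatFunc ℚ) ^ ((μ.sum : ℤ) - r) * qIntZ ((μ.sum : ℤ) - r)
        * ((RatFunc.X : RatFunc ℚ) ^ 2) ^ ((μ.sum : ℤ) - (boxesAfter μ r : ℤ))
        * (1 + ((RatFunc.X : RatFunc ℚ) ^ 2)⁻¹
            - ((RatFunc.X : RatFunc ℚ) ^ 2) ^ (-1 + (conjPart μ (r + 1) : ℤ))
            - ((RatFunc.X : RatFunc ℚ) ^ 2) ^ (-(conjPart μ r : ℤ))))
      = (RatFunc.X : RatFunc ℚ) ^ (μ.sum : ℤ) * qIntZ (μ.sum)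
          * (((RatFunc.X : RatFunc ℚ) ^ 2) ^ ((μ.card : ℤ) - 1) - 1) := by
  classical
  have hq := Qq_ne_zero
  have hd := denom_ne_zero
  have h0 : ∀ r : ℕ, μ.sum < r →
      (RatFunc.X : RatFunc ℚ) ^ ((μ.sum : ℤ) - r) * qIntZ ((μ.sum : ℤ) - r)
        * ((RatFunc.X : RatFunc ℚ) ^ 2) ^ ((μ.sum : ℤ) - (boxesAfter μ r : ℤ))
        * (1 + ((RatFunc.X : RatFunc ℚ) ^ 2)⁻¹
            - ((RatFunc.X : RatFunc ℚ) ^ 2) ^ (-1 + (conjPart μ (r + 1) : ℤ))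
            - ((RatFunc.X : RatFunc ℚ) ^ 2) ^ (-(conjPart μ r : ℤ))) = 0 := by
    intro r hr
    rw [conj_top μ hr, conj_top μ (show μ.sum < r + 1 by omega)]
    norm_num
  rw [finsum_cut _ μ.sum h0, Finset.sum_range_succ']
  rw [if_neg (by norm_num : ¬ (1:ℕ) ≤ 0), add_zero]
  have hterm : ∀ s ∈ Finset.range μ.sum,
      (if 1 ≤ s + 1 then
        (RatFunc.X : RatFunc ℚ) ^ ((μ.sum : ℤ) - (s+1 : ℕ)) * qIntZ ((μ.sum : ℤ) - (s+1 : ℕ))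
          * ((RatFunc.X : RatFunc ℚ) ^ 2) ^ ((μ.sum : ℤ) - (boxesAfter μ (s+1) : ℤ))
          * (1 + ((RatFunc.X : RatFunc ℚ) ^ 2)⁻¹
              - ((RatFunc.X : RatFunc ℚ) ^ 2) ^ (-1 + (conjPart μ (s+1+1) : ℤ))
              - ((RatFunc.X : RatFunc ℚ) ^ 2) ^ (-(conjPart μ (s+1) : ℤ)))
        else 0)
      = gterm μ s * (RatFunc.X - (RatFunc.X : RatFunc ℚ)⁻¹)⁻¹ := by
    intro s _
    rw [if_pos (Nat.succ_le_succ s.zero_le), pref, gterm, P, Qq, div_eq_mul_inv]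
    ring
  rw [Finset.sum_congr rfl hterm, ← Finset.sum_mul, core μ hpos, pref, div_eq_mul_inv]
  rw [show ((RatFunc.X : RatFunc ℚ) ^ 2) = Qq from rfl]
  ring
end
end

section
/- For a partition μ of n with ℓ(μ) parts, and with μ^r_+ = the partition formed by parts of μ strictly greater than r and μ^r_- = parts strictly less than r: Σ_{r=1}^{n-1} v^{n-r}[n-r]_v (q^{ℓ(μ)} + q^{ℓ(μ)-1} - q^{ℓ(μ)-1+ℓ(μ^r_+)} - q^{ℓ(μ^r_-)}) · q^{Σ_i min(r, μ_i) - ℓ(μ)} = v^n [n]_v (q^{ℓ(μ)-1} - 1). -/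
/-!
Put `q = v²`, `s(r) = Σ_i min(r, μ_i)` and `a_r = q^{s(r)}`. Since `s(r+1) - s(r)` is the number
of parts `> r`, the bracket times `q^{s(r) - ℓ(μ)}` is the second difference
`(a_r - a_{r-1}) - q⁻¹ (a_{r+1} - a_r)`, while `v^m [m]_v = (q^m - 1) v / (q - 1)`.
The weights `w_r = q^{n-r} - 1` satisfy `w_{r+1} = q⁻¹ w_r + (q⁻¹ - 1)` and `w_n = 0`, so the
weighted sum of second differences telescopes to the boundary values `a_0 = 1`,
`a_1 = q^{ℓ(μ)}` and `a_n = q^n`.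
-/

noncomputable section

open Finset

theorem Multiset.sum_map_min_succ (μ : Multiset ℕ) (r : ℕ) :
    (μ.map (min (r + 1))).sum = (μ.map (min r)).sum + (μ.filter (r < ·)).card := by
  induction μ using Multiset.induction with
  | empty => simp
  | cons a μ ih =>
    simp only [Multiset.map_cons, Multiset.sum_cons, Multiset.filter_cons, ih]
    split_ifs <;>
      simp only [Multiset.singleton_add, Multiset.card_cons, Multiset.zero_add] <;> omega

theorem Multiset.card_filter_lt_add_card_filter_lt (μ : Multiset ℕ) (r : ℕ) :
    (μ.filter (· < r + 1)).card + (μ.filter (r < ·)).card = μ.card := by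
  conv_rhs => rw [← Multiset.filter_add_not (· < r + 1) μ]
  rw [Multiset.card_add]
  congr 2
  exact Multiset.filter_congr fun x _ => by omega

theorem Multiset.sum_map_min_one (μ : Multiset ℕ) (hpos : ∀ x ∈ μ, 0 < x) :
    (μ.map (min 1)).sum = μ.card := by
  rw [Multiset.map_congr rfl fun x hx => min_eq_left (hpos x hx), Multiset.map_const',
    Multiset.sum_replicate, smul_eq_mul, mul_one]

theorem Multiset.sum_map_min_sum (μ : Multiset ℕ) : (μ.map (min μ.sum)).sum = μ.sum := by
  rw [Multiset.map_congr rfl fun x hx => min_eq_right (Multiset.le_sum_of_mem hx),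
    Multiset.map_id']

theorem X_zpow_mul_qIntZ (m : ℤ) :
    (RatFunc.X : RatFunc ℚ) ^ m * qIntZ m
      = ((RatFunc.X ^ 2) ^ m - 1) * (RatFunc.X / (RatFunc.X ^ 2 - 1)) := by
  have hX : (RatFunc.X : RatFunc ℚ) ≠ 0 := RatFunc.X_ne_zero
  rw [qIntZ, sq, mul_zpow, zpow_neg]
  field_simp

theorem sum_Ico_zpow_sub_one_mul_second_difference {K : Type*} [Field K] {q : K} (hq : q ≠ 0)
    (a : ℕ → K) (n : ℕ) :
    ∑ r ∈ Ico 1 n, (q ^ ((n : ℤ) - r) - 1) * (a r - a (r - 1) - q⁻¹ * (a (r + 1) - a r))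
      = (q ^ ((n : ℤ) - 1) - 1) * (a 1 - a 0) + (q⁻¹ - 1) * (a n - a 1) := by
  rcases Nat.eq_zero_or_pos n with rfl | hn
  · rw [Ico_eq_empty_of_le zero_le_one, sum_empty, Nat.cast_zero, zero_sub, zpow_neg_one]
    ring
  set w : ℕ → K := fun r => q ^ ((n : ℤ) - r) - 1
  have hw : ∀ r, w (r + 1) = q⁻¹ * w r + (q⁻¹ - 1) := fun r => by
    simp only [w, Nat.cast_add, Nat.cast_one, sub_add_eq_sub_sub, zpow_sub_one₀ hq]
    ring
  have hsummand : ∀ r : ℕ,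
      (q ^ ((n : ℤ) - r) - 1) * (a r - a (r - 1) - q⁻¹ * (a (r + 1) - a r))
      = -(w (r + 1) * (a (r + 1) - a (r + 1 - 1)) - w r * (a r - a (r - 1)))
        + (q⁻¹ - 1) * (a (r + 1) - a r) := fun r => by
    rw [Nat.add_sub_cancel, hw]
    ring
  simp only [hsummand, sum_add_distrib, sum_neg_distrib, ← mul_sum,
    sum_Ico_sub (fun r => w r * (a r - a (r - 1))) hn, sum_Ico_sub a hn]
  simp [w]

theorem Multiset.bracket_mul_zpow_eq_second_difference {K : Type*} [Field K] {q : K}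
    (hq : q ≠ 0) (μ : Multiset ℕ) (k : ℕ) :
    let a : ℕ → K := fun r => q ^ ((μ.map (min r)).sum : ℤ)
    (q ^ (μ.card : ℤ) + q ^ ((μ.card : ℤ) - 1)
        - q ^ ((μ.card : ℤ) - 1 + ((μ.filter fun x => k + 1 < x).card : ℤ))
        - q ^ (((μ.filter fun x => x < k + 1).card : ℤ)))
      * q ^ (((μ.map (min (k + 1))).sum : ℤ) - μ.card)
      = a (k + 1) - a k - q⁻¹ * (a (k + 1 + 1) - a (k + 1)) := by
  intro a
  have hnext := μ.sum_map_min_succ (k + 1)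
  have hcur := μ.sum_map_min_succ k
  have hcard := μ.card_filter_lt_add_card_filter_lt k
  have hgt : ((μ.filter fun x => k + 1 < x).card : ℤ)
      = (μ.map (min (k + 1 + 1))).sum - (μ.map (min (k + 1))).sum := by omega
  have hlt : ((μ.filter fun x => x < k + 1).card : ℤ)
      = μ.card - ((μ.map (min (k + 1))).sum - (μ.map (min k)).sum) := by omega
  rw [hgt, hlt]
  simp only [a, add_mul, sub_mul, mul_sub, ← zpow_neg_one, ← zpow_add₀ hq]
  ring_nf

/-- Lemma 4.3: for a partition `μ` of `n` with `ℓ(μ)` parts,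
working in `ℚ(v)` with `q = v²`, and with `ℓ(μ^r_+)` (resp. `ℓ(μ^r_-)`) the number
of parts of `μ` strictly greater (resp. strictly less) than `r`:
`Σ_{r=1}^{n-1} v^{n-r}[n-r]_v (q^{ℓ(μ)} + q^{ℓ(μ)-1} - q^{ℓ(μ)-1+ℓ(μ^r_+)} - q^{ℓ(μ^r_-)})
   ⬝ q^{Σ_i min(r,μ_i) - ℓ(μ)}  =  v^n [n]_v (q^{ℓ(μ)-1} - 1)`. -/
theorem stmt7 (μ : Multiset ℕ) (hpos : ∀ x ∈ μ, 0 < x) :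
    ∑ r ∈ Finset.Icc 1 (μ.sum - 1),
      (RatFunc.X : RatFunc ℚ) ^ ((μ.sum : ℤ) - r) * qIntZ ((μ.sum : ℤ) - r)
        * (((RatFunc.X : RatFunc ℚ) ^ 2) ^ (μ.card : ℤ)
            + ((RatFunc.X : RatFunc ℚ) ^ 2) ^ ((μ.card : ℤ) - 1)
            - ((RatFunc.X : RatFunc ℚ) ^ 2)
                ^ ((μ.card : ℤ) - 1 + ((μ.filter fun x => r < x).card : ℤ))
            - ((RatFunc.X : RatFunc ℚ) ^ 2) ^ (((μ.filter fun x => x < r).card : ℤ)))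
        * ((RatFunc.X : RatFunc ℚ) ^ 2)
            ^ (((μ.map (min r)).sum : ℤ) - (μ.card : ℤ))
      = (RatFunc.X : RatFunc ℚ) ^ (μ.sum : ℤ) * qIntZ (μ.sum)
          * (((RatFunc.X : RatFunc ℚ) ^ 2) ^ ((μ.card : ℤ) - 1) - 1) := by
  set q : RatFunc ℚ := RatFunc.X ^ 2
  have hq : q ≠ 0 := pow_ne_zero 2 RatFunc.X_ne_zero
  set a : ℕ → RatFunc ℚ := fun r => q ^ ((μ.map (min r)).sum : ℤ)
  have hIcc : Icc 1 (μ.sum - 1) = Ico 1 μ.sum := by ext; simp only [mem_Icc, mem_Ico]; omega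
  rw [hIcc, sum_congr rfl (g := fun r : ℕ => RatFunc.X / (q - 1)
      * ((q ^ ((μ.sum : ℤ) - r) - 1) * (a r - a (r - 1) - q⁻¹ * (a (r + 1) - a r)))) ?summand,
    ← mul_sum, sum_Ico_zpow_sub_one_mul_second_difference hq a, X_zpow_mul_qIntZ]
  · simp only [a, μ.sum_map_min_one hpos, μ.sum_map_min_sum, Nat.zero_min, Multiset.map_const',
      Multiset.sum_replicate, smul_zero, Nat.cast_zero, zpow_zero, zpow_sub_one₀ hq]
    field_simp
    ring
  case summand =>
    intro r hr
    obtain ⟨k, rfl⟩ : ∃ k, r = k + 1 := ⟨r - 1, by grind⟩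
    rw [X_zpow_mul_qIntZ, mul_assoc, μ.bracket_mul_zpow_eq_second_difference hq k,
      Nat.add_sub_cancel]
    ring

end
end

section
/- Let q, K be central variables and suppose P_r (r ≥ 1) are commuting elements with Θ(z) = exp(Σ_{r≥1} ((q^r-1)/r) P_r z^r) · exp(Σ_{k≥1} ((1-q^k)/(2k)) K^k z^{2k}) and E(-z) = ∏_{m≥0} Θ(q^m z) / ∏_{m≥0}(1 - q^{2m+1} K z^2) (formal infinite products converging coefficientwise since q^m z → 0). Then E(z) = exp(Σ_{r≥1} ((-1)^{r-1}/r) P_r z^r) · exp_q(Kz^2/(1-q))^{1/2}. -/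
noncomputable section

/-- A commutative `ℚ`-algebra (in fact field) containing the central variable `K`
and the commuting variables `P_1, P_2, …`. -/
abbrev RP : Type := FractionRing (MvPolynomial ℕ ℚ)

/-- The central variable `K`. -/
def Kv : RP := algebraMap (MvPolynomial ℕ ℚ) RP (MvPolynomial.X 0)

/-- The commuting elements `P_r`, `r ≥ 1`. -/
def Pv (r : ℕ) : RP := algebraMap (MvPolynomial ℕ ℚ) RP (MvPolynomial.X r)

instance : TopologicalSpace RP := ⊥

/-- `ℚ((q))-type` coefficient ring: formal power series in `q`. -/
abbrev Cq : Type := PowerSeries RP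

/-- The variable `q`, topologically nilpotent in `Cq`. -/
def qv : Cq := PowerSeries.X

/-- Topology of coefficientwise convergence on `RP[[q]]`. -/
instance : TopologicalSpace Cq :=
  TopologicalSpace.induced (fun f (n : ℕ) => PowerSeries.coeff (R := RP) n f) inferInstance

/-- Topology of coefficientwise convergence on `RP[[q]][[z]]`, in which the infinite
products below converge (the `m`-th factor is `1 + O(q^m z)`). -/
instance : TopologicalSpace (PowerSeries Cq) :=
  TopologicalSpace.induced (fun f (n : ℕ) => PowerSeries.coeff (R := Cq) n f) inferInstance

/-- The exponential of a formal power series (with zero constant term) over a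
commutative `ℚ`-algebra: `exp f = Σ_{k≥0} f^k/k!`; only `k ≤ n` contributes to the
`n`-th coefficient. -/
def expPS {R : Type} [CommRing R] [Algebra ℚ R] (f : PowerSeries R) : PowerSeries R :=
  PowerSeries.mk fun n =>
    ∑ k ∈ Finset.range (n + 1), ((k.factorial : ℚ)⁻¹) • PowerSeries.coeff (R := R) n (f ^ k)

/-!
`expPS` turns sums with vanishing constant term into products, because
`exp(f + g) exp(-f) exp(-g)` has derivative zero. Hence both infinite products are exponentials of
coefficientwise convergent sums: `Θ(q^m z) = exp(Σ_n q^{mn} θ_n z^n)` sums over `m` to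
`exp(Σ_n θ_n z^n / (1 - q^n))`, and `1 - c z² = exp(-Σ_k c^k z^{2k}/k)` (from
`exp(log(1+X)) = 1 + X`) sums over `c = q^{2m+1} K` to
`exp(-Σ_k q^k K^k z^{2k} / (k(1 - q^{2k})))`. The theorem is then an identity between exponents,
checked coefficientwise: the `P_r`-terms agree because `(q^r - 1)/(1 - q^r) = -1`, the
`K^k`-terms by the partial fraction `(1 - q^k)/(1 - q^{2k}) = 1/(1 - q^k) - 2q^k/(1 - q^{2k})`.
-/

open PowerSeries

section Exponential

variable {R : Type} [CommRing R] [Algebra ℚ R]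

theorem PowerSeries.constantCoeff_rescale {S : Type} [CommSemiring S] (a : S) (f : S⟦X⟧) :
    constantCoeff (rescale a f) = constantCoeff f := by
  rw [← coeff_zero_eq_constantCoeff_apply, coeff_rescale, pow_zero, one_mul,
    coeff_zero_eq_constantCoeff_apply]

theorem PowerSeries.rescale_neg_one_involutive {S : Type} [CommRing S] :
    Function.Involutive (rescale (-1 : S)) := fun f => by
  rw [rescale_rescale, neg_one_mul, neg_neg, rescale_one, RingHom.id_apply]

theorem coeff_expPS_of_le {f : R⟦X⟧} (hf : constantCoeff f = 0) {n N : ℕ} (hn : n ≤ N) :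
    coeff n (expPS f) = coeff n (∑ k ∈ Finset.range (N + 1), (k.factorial : ℚ)⁻¹ • f ^ k) := by
  rw [expPS, coeff_mk, map_sum]
  refine Finset.sum_subset (Finset.range_subset_range.mpr (by omega)) fun k hk hk' => ?_
  have hkn : (n : ℕ∞) < k := Nat.cast_lt.mpr (by simp at hk hk'; omega)
  rw [coeff_of_lt_order n (hkn.trans_le (le_order_pow_of_constantCoeff_eq_zero k hf)), smul_zero]

@[simp]
theorem constantCoeff_expPS (f : R⟦X⟧) : constantCoeff (expPS f) = 1 := by
  rw [← coeff_zero_eq_constantCoeff_apply, expPS, coeff_mk]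
  simp

theorem derivative_expPS {f : R⟦X⟧} (hf : constantCoeff f = 0) :
    d⁄dX R (expPS f) = expPS f * d⁄dX R f := by
  let T : ℕ → R⟦X⟧ := fun N => ∑ k ∈ Finset.range (N + 1), (k.factorial : ℚ)⁻¹ • f ^ k
  have hT : ∀ N, d⁄dX R (T (N + 1)) = T N * d⁄dX R f := fun N => by
    simp only [T, map_sum, Finset.sum_mul]
    rw [Finset.sum_range_succ']
    refine (add_eq_left.mpr (by simp)).trans (Finset.sum_congr rfl fun k _ => ?_)
    have hk : ((k + 1 : ℕ) : R⟦X⟧) * f ^ k * d⁄dX R f = ((k + 1 : ℕ) : ℚ) • (f ^ k * d⁄dX R f) := by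
      rw [Nat.cast_smul_eq_nsmul, nsmul_eq_mul, mul_assoc]
    rw [(d⁄dX R).map_smul_of_tower, derivative_pow, Nat.add_sub_cancel, hk, smul_smul,
      smul_mul_assoc, Nat.factorial_succ, Nat.cast_mul, mul_inv, mul_comm, ← mul_assoc,
      mul_inv_cancel₀ (by positivity), one_mul]
  ext n
  rw [coeff_derivative, coeff_expPS_of_le hf le_rfl, ← coeff_derivative, hT, coeff_mul, coeff_mul]
  exact Finset.sum_congr rfl fun p hp => by
    rw [coeff_expPS_of_le hf (Finset.HasAntidiagonal.antidiagonal.fst_le hp)]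

theorem eq_of_derivative_eq {f g : R⟦X⟧} (hD : d⁄dX R f = d⁄dX R g)
    (hc : constantCoeff f = constantCoeff g) : f = g :=
  haveI := IsAddTorsionFree.of_module_rat R
  derivative.ext hD hc

@[simp]
theorem expPS_zero : expPS (0 : R⟦X⟧) = 1 :=
  eq_of_derivative_eq (by rw [derivative_expPS (map_zero _), map_zero, mul_zero, derivative_one])
    (by simp)

theorem expPS_mul_expPS_neg {f : R⟦X⟧} (hf : constantCoeff f = 0) :
    expPS f * expPS (-f) = 1 := by
  have hf' : constantCoeff (-f) = 0 := by rw [map_neg, hf, neg_zero]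
  refine eq_of_derivative_eq ?_ (by simp)
  rw [Derivation.leibniz, derivative_expPS hf, derivative_expPS hf', derivative_one, map_neg,
    smul_eq_mul, smul_eq_mul]
  ring

theorem expPS_add {f g : R⟦X⟧} (hf : constantCoeff f = 0) (hg : constantCoeff g = 0) :
    expPS (f + g) = expPS f * expPS g := by
  have hfg : constantCoeff (f + g) = 0 := by rw [map_add, hf, hg, add_zero]
  have hf' : constantCoeff (-f) = 0 := by rw [map_neg, hf, neg_zero]
  have hg' : constantCoeff (-g) = 0 := by rw [map_neg, hg, neg_zero]
  have key : expPS (f + g) * expPS (-f) * expPS (-g) = 1 := by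
    refine eq_of_derivative_eq ?_ (by simp)
    simp only [Derivation.leibniz, derivative_expPS hfg, derivative_expPS hf',
      derivative_expPS hg', derivative_one, map_add, map_neg, smul_eq_mul]
    ring
  calc expPS (f + g)
      = expPS (f + g) * (expPS f * expPS (-f)) * (expPS g * expPS (-g)) := by
        rw [expPS_mul_expPS_neg hf, expPS_mul_expPS_neg hg, mul_one, mul_one]
    _ = expPS (f + g) * expPS (-f) * expPS (-g) * (expPS f * expPS g) := by ring
    _ = expPS f * expPS g := by rw [key, one_mul]

theorem expPS_sum {ι : Type} (s : Finset ι) {g : ι → R⟦X⟧} (hg : ∀ i, constantCoeff (g i) = 0) :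
    expPS (∑ i ∈ s, g i) = ∏ i ∈ s, expPS (g i) := by
  classical
  induction s using Finset.induction with
  | empty => simp
  | insert i s hi ih =>
    rw [Finset.sum_insert hi, Finset.prod_insert hi, ← ih,
      expPS_add (hg i) (by rw [map_sum]; exact Finset.sum_eq_zero fun j _ => hg j)]

theorem rescale_expPS (a : R) (f : R⟦X⟧) : rescale a (expPS f) = expPS (rescale a f) := by
  refine PowerSeries.ext fun n => ?_
  rw [coeff_rescale, expPS, expPS, coeff_mk, coeff_mk, Finset.mul_sum]
  refine Finset.sum_congr rfl fun k _ => ?_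
  rw [← map_pow, coeff_rescale, mul_smul_comm]

theorem expand_expPS (p : ℕ) (hp : p ≠ 0) {f : R⟦X⟧} (hf : constantCoeff f = 0) :
    expand p hp (expPS f) = expPS (expand p hp f) := by
  refine PowerSeries.ext fun n => ?_
  rw [coeff_expand]
  conv_rhs => rw [expPS, coeff_mk]
  simp only [← map_pow, coeff_expand, smul_ite, smul_zero]
  split_ifs with hdvd
  · rw [coeff_expPS_of_le hf (Nat.div_le_self n p), map_sum]
    rfl
  · simp

theorem expPS_log : expPS (log R) = 1 + X := by
  have hmul : (1 + X) * d⁄dX R (log R) = 1 := by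
    ext n
    rcases n with _ | n
    · simp [deriv_log]
    · simp [deriv_log, add_mul, coeff_succ_X_mul, pow_succ]
  have key : (1 + X) * expPS (-log R) = 1 := by
    refine eq_of_derivative_eq ?_ (by simp)
    rw [Derivation.leibniz, derivative_expPS (by simp), map_neg, smul_eq_mul, smul_eq_mul,
      map_add, derivative_one, derivative_X]
    linear_combination (-expPS (-log R)) * hmul
  calc expPS (log R) = (1 + X) * expPS (-log R) * expPS (log R) := by rw [key, one_mul]
    _ = 1 + X := by
      rw [mul_assoc, mul_comm (expPS _), expPS_mul_expPS_neg constantCoeff_log, mul_one]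

theorem one_add_C_mul_X_pow_eq_expPS (a : R) (p : ℕ) (hp : p ≠ 0) :
    1 + C a * X ^ p = expPS (expand p hp (rescale a (log R))) := by
  rw [← expand_expPS p hp (by rw [constantCoeff_rescale, constantCoeff_log]), ← rescale_expPS,
    expPS_log]
  simp [rescale_X, expand_C]

end Exponential

section PiTopology

open scoped PowerSeries.WithPiTopology

variable {R : Type} [CommRing R] [TopologicalSpace R]

theorem induced_coeff_eq_withPiTopology {S : Type} [Semiring S] [TopologicalSpace S] :
    TopologicalSpace.induced (fun (f : S⟦X⟧) (n : ℕ) => coeff n f) inferInstance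
      = PowerSeries.WithPiTopology.instTopologicalSpace S :=
  let e : ℕ ≃ (Unit →₀ ℕ) := (Finsupp.uniqueLinearEquiv ℕ ℕ ()).toEquiv.symm
  (Homeomorph.piCongrLeft (Y := fun _ => S) e).symm.isInducing.eq_induced.symm

theorem continuous_expPS [Algebra ℚ R] [IsTopologicalRing R] :
    Continuous (expPS : R⟦X⟧ → R⟦X⟧) := by
  refine continuous_iff_continuousAt.mpr fun f => ?_
  refine (WithPiTopology.tendsto_iff_coeff_tendsto _ _ _ _).mpr fun n => ?_
  simp only [expPS, coeff_mk, Algebra.smul_def]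
  exact (continuous_finsetSum _ fun k _ => continuous_const.mul
    ((WithPiTopology.continuous_coeff R n).comp (continuous_pow k))).continuousAt

theorem HasSum.hasProd_expPS [Algebra ℚ R] [IsTopologicalRing R] {ι : Type} {g : ι → R⟦X⟧}
    {G : R⟦X⟧} (h : HasSum g G) (hg : ∀ i, constantCoeff (g i) = 0) :
    HasProd (fun i => expPS (g i)) (expPS G) := by
  have := (continuous_expPS.tendsto G).comp h
  simpa only [HasProd, Function.comp_def, expPS_sum _ hg] using this

theorem hasSum_rescale [IsTopologicalRing R] {ι : Type} {a : ι → R} {s : ℕ → R}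
    (hs : ∀ n ≠ 0, HasSum (fun i => a i ^ n) (s n)) {f : R⟦X⟧} (hf : constantCoeff f = 0) :
    HasSum (fun i => rescale (a i) f) (mk fun n => s n * coeff n f) := by
  refine (WithPiTopology.hasSum_iff_hasSum_coeff R).mpr fun n => ?_
  simp only [coeff_rescale, coeff_mk]
  rcases eq_or_ne n 0 with rfl | hn
  · simp [coeff_zero_eq_constantCoeff_apply, hf]
  · exact (hs n hn).mul_right _

theorem HasSum.expand {ι : Type} {g : ι → R⟦X⟧} {G : R⟦X⟧} (h : HasSum g G) (p : ℕ) (hp : p ≠ 0) :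
    HasSum (fun i => expand p hp (g i)) (expand p hp G) := by
  refine (WithPiTopology.hasSum_iff_hasSum_coeff R).mpr fun n => ?_
  simp only [coeff_expand]
  split_ifs
  · exact (WithPiTopology.hasSum_iff_hasSum_coeff R).mp h _
  · exact hasSum_zero

theorem PowerSeries.hasSum_pow_of_constantCoeff_eq_zero {k : Type} [Field k] [TopologicalSpace k]
    [IsTopologicalRing k] [T2Space k] {x : k⟦X⟧} (hx : constantCoeff x = 0) :
    HasSum (x ^ ·) (1 - x)⁻¹ := by
  have h := (WithPiTopology.summable_pow_of_constantCoeff_eq_zero hx).hasSum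
  rwa [(eq_inv_iff_mul_eq_one (by simp [hx])).mpr
    (WithPiTopology.tsum_pow_mul_one_sub_of_constantCoeff_eq_zero hx)] at h

end PiTopology

section Setting

instance : DiscreteTopology RP := ⟨rfl⟩

theorem instTopologicalSpaceCq_eq :
    instTopologicalSpaceCq = WithPiTopology.instTopologicalSpace RP :=
  induced_coeff_eq_withPiTopology

theorem instTopologicalSpacePowerSeriesCq_eq :
    instTopologicalSpacePowerSeriesCq = WithPiTopology.instTopologicalSpace Cq :=
  induced_coeff_eq_withPiTopology

instance : IsTopologicalRing Cq := by
  rw [instTopologicalSpaceCq_eq]; exact WithPiTopology.instIsTopologicalRing RP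

instance : T2Space Cq := by
  rw [instTopologicalSpaceCq_eq]; exact WithPiTopology.instT2Space RP

instance : T2Space (PowerSeries Cq) := by
  rw [instTopologicalSpacePowerSeriesCq_eq]; exact WithPiTopology.instT2Space Cq

theorem hasSum_qv_pow_pow {n : ℕ} (hn : n ≠ 0) : HasSum (fun m => (qv ^ n) ^ m) (1 - qv ^ n)⁻¹ := by
  have h := hasSum_pow_of_constantCoeff_eq_zero (k := RP) (x := qv ^ n) (by simp [qv, zero_pow hn])
  rwa [← instTopologicalSpaceCq_eq] at h

theorem hasProd_rescale_qv_pow_expPS {f : PowerSeries Cq} (hf : constantCoeff f = 0) :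
    HasProd (fun m => rescale (qv ^ m) (expPS f))
      (expPS (mk fun n => (1 - qv ^ n)⁻¹ * coeff n f)) := by
  rw [instTopologicalSpacePowerSeriesCq_eq]
  simp only [rescale_expPS]
  refine (hasSum_rescale (fun n hn => ?_) hf).hasProd_expPS fun m => ?_
  · simpa only [← pow_mul, mul_comm] using hasSum_qv_pow_pow hn
  · rw [constantCoeff_rescale, hf]

def logKProduct : PowerSeries Cq :=
  expand 2 two_ne_zero
    (mk fun k => (-(k : ℚ)⁻¹) • (qv ^ k * C (Kv ^ k) * (1 - qv ^ (2 * k))⁻¹))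

theorem hasProd_one_sub_qv_odd_pow_mul_K :
    HasProd (fun m : ℕ => 1 - C (qv ^ (2 * m + 1) * C Kv) * X ^ 2) (expPS logKProduct) := by
  have hfactor : ∀ m : ℕ, 1 - C (qv ^ (2 * m + 1) * C Kv) * X ^ 2
      = expPS (expand 2 two_ne_zero (rescale (-(qv ^ (2 * m + 1) * C Kv)) (log Cq))) := fun m => by
    rw [← one_add_C_mul_X_pow_eq_expPS, map_neg, neg_mul, sub_eq_add_neg]
  have hs : ∀ n ≠ 0, HasSum (fun m : ℕ => (-(qv ^ (2 * m + 1) * C Kv)) ^ n)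
      ((-(qv * C Kv)) ^ n * (1 - qv ^ (2 * n))⁻¹) := fun n hn => by
    have hterm : ∀ m : ℕ,
        (-(qv ^ (2 * m + 1) * C Kv)) ^ n = (-(qv * C Kv)) ^ n * (qv ^ (2 * n)) ^ m :=
      fun m => by ring
    simpa only [hterm] using (hasSum_qv_pow_pow (by omega)).mul_left ((-(qv * C Kv)) ^ n)
  have hlim : mk (fun n => (-(qv * C Kv)) ^ n * (1 - qv ^ (2 * n))⁻¹ * coeff n (log Cq))
      = mk fun k => (-(k : ℚ)⁻¹) • (qv ^ k * C (Kv ^ k) * (1 - qv ^ (2 * k))⁻¹) := by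
    refine PowerSeries.ext fun n => ?_
    rcases eq_or_ne n 0 with rfl | hn
    · simp
    have hsign : (-1 : ℚ) ^ n * ((-1) ^ (n + 1) / n) = -(n : ℚ)⁻¹ := by
      rw [← mul_div_assoc, ← pow_add, Odd.neg_one_pow ⟨n, by ring⟩, neg_div, one_div]
    have := congrArg (algebraMap ℚ Cq) hsign
    simp only [map_mul, map_pow, map_neg, map_one] at this
    simp only [coeff_mk, coeff_log, if_neg hn, Algebra.smul_def, neg_pow (qv * C Kv), mul_pow, map_neg,
      map_pow]
    linear_combination (qv ^ n * C Kv ^ n * (1 - qv ^ (2 * n))⁻¹) * this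
  rw [instTopologicalSpacePowerSeriesCq_eq]
  simp only [hfactor, logKProduct, ← hlim]
  exact ((hasSum_rescale hs constantCoeff_log).expand 2 two_ne_zero).hasProd_expPS
    fun m => by simp [constantCoeff_rescale]

end Setting

section Exponents

theorem inv_one_sub_mul_smul_sub_one {A : Type} [CommRing A] [Algebra ℚ A] {x b : A}
    (hb : b * (1 - x) = 1) (c : ℚ) (y : A) : b * (c • ((x - 1) * y)) = -(c • y) := by
  rw [mul_smul_comm, ← smul_neg]
  congr 1
  linear_combination (-y) * hb

theorem inv_one_sub_sq_mul_smul {A : Type} [CommRing A] [Algebra ℚ A] {x a b : A}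
    (ha : a * (1 - x) = 1) (hb : b * (1 - x ^ 2) = 1) {k : ℕ} (hk : k ≠ 0) (y : A) :
    b * ((2 * k : ℚ)⁻¹ • ((1 - x) * y))
      = (2 * k : ℚ)⁻¹ • (y * a) + -((k : ℚ)⁻¹ • (x * y * b)) := by
  have hscal : (-(k : ℚ)⁻¹) = (2 * k : ℚ)⁻¹ * (-2) := by field_simp
  rw [← neg_smul, hscal, mul_smul, mul_smul_comm, ← smul_add]
  congr 1
  rw [neg_smul, ofNat_smul_eq_nsmul ℚ 2, two_nsmul]
  linear_combination (y * a) * hb - (y * b * (1 + x)) * ha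

def logThetaP : PowerSeries Cq :=
  PowerSeries.mk fun r =>
    if r = 0 then 0 else ((r : ℚ)⁻¹) • ((qv ^ r - 1) * PowerSeries.C (R := RP) (Pv r))

def logThetaK : PowerSeries Cq :=
  PowerSeries.mk fun n =>
    if n = 0 then 0
    else if n % 2 = 0 then
      ((2 * (n / 2) : ℚ)⁻¹) • ((1 - qv ^ (n / 2)) * PowerSeries.C (R := RP) (Kv ^ (n / 2)))
    else 0

def logEP : PowerSeries Cq :=
  PowerSeries.mk fun r =>
    if r = 0 then 0 else (((-1 : ℚ) ^ (r - 1)) * (r : ℚ)⁻¹) • PowerSeries.C (R := RP) (Pv r)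

def logEK : PowerSeries Cq :=
  PowerSeries.mk fun n =>
    if n = 0 then 0
    else if n % 2 = 0 then
      ((2 * (n / 2) : ℚ)⁻¹) • (PowerSeries.C (R := RP) (Kv ^ (n / 2)) * (1 - qv ^ (n / 2))⁻¹)
    else 0

theorem inv_one_sub_qv_pow_mul {n : ℕ} (hn : n ≠ 0) : (1 - qv ^ n)⁻¹ * (1 - qv ^ n) = 1 :=
  PowerSeries.inv_mul_cancel _ (by simp [qv, zero_pow hn])

theorem exponent_identity :
    mk (fun n => (1 - qv ^ n)⁻¹ * coeff n (logThetaP + logThetaK))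
      = rescale (-1) (logEP + logEK) + logKProduct := by
  refine PowerSeries.ext fun n => ?_
  simp only [logThetaP, logThetaK, logEP, logEK, logKProduct, coeff_mk, map_add, coeff_rescale,
    coeff_expand]
  rcases Nat.even_or_odd' n with ⟨k, rfl | rfl⟩
  · rcases eq_or_ne k 0 with rfl | hk
    · simp
    have h2k : 2 * k ≠ 0 := by omega
    have hsq : (qv ^ k) ^ 2 = qv ^ (2 * k) := by ring
    have hP := inv_one_sub_mul_smul_sub_one (inv_one_sub_qv_pow_mul h2k) ((2 * k : ℕ) : ℚ)⁻¹
      (C (Pv (2 * k)))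
    have hK := inv_one_sub_sq_mul_smul (inv_one_sub_qv_pow_mul hk)
      (hsq ▸ inv_one_sub_qv_pow_mul h2k) hk (C (Kv ^ k))
    have hc : 2 * (((2 * k : ℕ) : ℚ) / 2) = 2 * k := by push_cast; ring
    rw [hsq] at hK
    simp only [if_neg h2k, Nat.mul_mod_right, if_true, dvd_mul_right,
      Nat.mul_div_cancel_left k two_pos, hc, Even.neg_one_pow ⟨k, two_mul k⟩,
      Odd.neg_one_pow (⟨k - 1, by omega⟩ : Odd (2 * k - 1)), one_mul, mul_add, neg_one_mul,
      neg_smul, add_assoc]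
    rw [hP, hK]
  · have hodd : 2 * k + 1 ≠ 0 := by omega
    have hdvd : ¬ 2 ∣ 2 * k + 1 := by omega
    have hmod : (2 * k + 1) % 2 ≠ 0 := by omega
    simp only [if_neg hodd, hdvd, if_neg hmod, if_false, add_zero, mul_zero,
      Odd.neg_one_pow (⟨k, rfl⟩ : Odd (2 * k + 1)), Nat.add_sub_cancel,
      Even.neg_one_pow ⟨k, two_mul k⟩, one_mul, neg_one_mul]
    exact inv_one_sub_mul_smul_sub_one (inv_one_sub_qv_pow_mul hodd) _ _

end Exponents

/-- cf. Proposition 5.9: suppose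
`Θ(z) = exp(Σ_{r≥1} ((q^r-1)/r) P_r z^r) ⬝ exp(Σ_{k≥1} ((1-q^k)/(2k)) K^k z^{2k})`
and `E(-z) ∏_{m≥0} (1-q^{2m+1}Kz²) = ∏_{m≥0} Θ(q^m z)` (infinite products taken in
the topology of coefficientwise convergence).  Then
`E(z) = exp(Σ_{r≥1} ((-1)^{r-1}/r) P_r z^r) ⬝ exp_q(Kz²/(1-q))^{1/2}`, where the
square root means the exponential of half the exponent
`Σ_{k≥1} K^k z^{2k}/(2k(1-q^k))`. -/
theorem stmt17 (E Θ : PowerSeries Cq)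
    (hΘ : Θ
      = expPS (PowerSeries.mk fun r =>
            if r = 0 then 0
            else ((r : ℚ)⁻¹) • ((qv ^ r - 1) * PowerSeries.C (R := RP) (Pv r)))
        * expPS (PowerSeries.mk fun n =>
            if n = 0 then 0
            else if n % 2 = 0 then
              ((2 * (n / 2) : ℚ)⁻¹) • ((1 - qv ^ (n / 2)) * PowerSeries.C (R := RP) (Kv ^ (n / 2)))
            else 0))
    (hE : PowerSeries.rescale (-1 : Cq) E
          * ∏' m : ℕ, ((1 : PowerSeries Cq)
              - PowerSeries.C (R := Cq) (qv ^ (2 * m + 1) * PowerSeries.C (R := RP) Kv)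
                * PowerSeries.X ^ 2)
        = ∏' m : ℕ, PowerSeries.rescale (qv ^ m) Θ) :
    E = expPS (PowerSeries.mk fun r =>
          if r = 0 then 0
          else (((-1 : ℚ) ^ (r - 1)) * (r : ℚ)⁻¹) • PowerSeries.C (R := RP) (Pv r))
        * expPS (PowerSeries.mk fun n =>
            if n = 0 then 0
            else if n % 2 = 0 then
              ((2 * (n / 2) : ℚ)⁻¹)
                • (PowerSeries.C (R := RP) (Kv ^ (n / 2)) * (1 - qv ^ (n / 2))⁻¹)
            else 0) := by
  change Θ = expPS logThetaP * expPS logThetaK at hΘ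
  change E = expPS logEP * expPS logEK
  have hθP : constantCoeff logThetaP = 0 := by simp [logThetaP]
  have hθK : constantCoeff logThetaK = 0 := by simp [logThetaK]
  have hEP : constantCoeff logEP = 0 := by simp [logEP]
  have hEK : constantCoeff logEK = 0 := by simp [logEK]
  have hK : constantCoeff logKProduct = 0 := by simp [logKProduct]
  have hR : constantCoeff (rescale (-1) (logEP + logEK)) = 0 := by
    rw [constantCoeff_rescale, map_add, hEP, hEK, add_zero]
  rw [← expPS_add hθP hθK] at hΘ
  rw [hΘ, (hasProd_rescale_qv_pow_expPS (by rw [map_add, hθP, hθK, add_zero])).tprod_eq,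
    hasProd_one_sub_qv_odd_pow_mul_K.tprod_eq, exponent_identity, expPS_add hR hK,
    ← rescale_expPS] at hE
  have hunit : IsUnit (expPS logKProduct) := .of_mul_eq_one _ (expPS_mul_expPS_neg hK)
  rw [← expPS_add hEP hEK]
  exact rescale_neg_one_involutive.injective (hunit.mul_left_injective hE)

end
end
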